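/- (Lossless merging for N overlapping chunks, the paper's Theorem 1.) Let S be a string, let Lc ≥ 1 be a chunk length and Lo ≥ 0 an overlap length, and let N be the least positive integer with Lc·N ≥ |S|. For 1 ≤ i ≤ N, let the i-th chunk be s_i = S[Lc·(i−1) : Lc·i + Lo] (the substring of S starting at position Lc·(i−1) of length Lc + Lo, truncated at the end of S), and let T_i = F(s_i). Suppose that for each 1 ≤ i ≤ N−1 there exist indices l_i, r_i and an integer n_i ≥ 1 such that: (i) for every 0 ≤ j ≤ n_i − 1, the (l_i + j)-th token of T_i equals the (r_i + j)-th token of T_{i+1}; (ii) their global start positions in S agree, i.e. Lc·(i−1) plus the start position of the (l_i + j)-th token of T_i relative to s_i equals Lc·i plus the start position of the (r_i + j)-th token of T_{i+1} relative to s_{i+1}; (iii) the total length of the matched run of tokens exceeds T; and (iv) the merge index ranges are well-formed, i.e. r_i + n_i ≤ l_{i+1} + n_{i+1} for 1 ≤ i ≤ N−2. Then the merged token list T = T_1[: l_1 + n_1] ++ T_2[r_1 + n_1 : l_2 + n_2] ++ … ++ T_{N−1}[r_{N−2} + n_{N−2} : l_{N−1} + n_{N−1}] ++ T_N[r_{N−1}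 + n_{N−1} :] equals F(S), the tokenization of the original string without splitting. -/

import Mathlib

/-!
Greedy tokenization is local in two ways. Tokenizing from a token boundary reproduces the
remaining tokens, and the first token of a string depends only on its first `T` characters,
`T` being the length of the longest vocabulary word, since every candidate is a prefix of
length at most `T`. Hence a token of a chunk is the token of `F S` at the same global position
as soon as the chunk still has `T` characters from that token on; this holds for every token
before the matched run, because the run alone is longer than `T`. Inside the run, chunk `i`
agrees token by token with chunk `i + 1` at the same global positions, so by downward induction
on `i` (the last chunk is a suffix of `S`) every token kept by the merge is the greedy token of
`S` at its position, and the merged list telescopes into `F S`.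
-/

variable {α : Type*} [DecidableEq α]

/-- The longest nonempty prefix of `S` belonging to the vocabulary `V`
(falling back to the first character of `S` if no such prefix exists). -/
noncomputable def firstTok (V : Finset (List α)) (S : List α) : List α :=
  ((V.filter (fun w => w ≠ [] ∧ w <+: S)).toList.argmax List.length).getD (S.take 1)

lemma firstTok_ne_nil (V : Finset (List α)) (a : α) (s : List α) :
    firstTok V (a :: s) ≠ [] := by
  unfold firstTok
  cases h : ((V.filter (fun w => w ≠ [] ∧ w <+: (a :: s))).toList.argmax List.length) with
  | none => simp
  | some w =>
    have hw : w ∈ (V.filter (fun w => w ≠ [] ∧ w <+: (a :: s))).toList :=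
      List.argmax_mem h
    rw [Finset.mem_toList, Finset.mem_filter] at hw
    simpa using hw.2.1

/-- Greedy (WordPiece-style) tokenization with vocabulary `V`. -/
noncomputable def F (V : Finset (List α)) : List α → List (List α)
  | [] => []
  | a :: s =>
    firstTok V (a :: s) :: F V ((a :: s).drop (firstTok V (a :: s)).length)
termination_by S => S.length
decreasing_by
  have h := firstTok_ne_nil V a s
  have hpos : 0 < (firstTok V (a :: s)).length := List.length_pos_iff.mpr h
  simp only [List.length_drop, List.length_cons]
  omega

def tokenStart {β : Type*} (A : List (List β)) (k : ℕ) : ℕ :=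
  ((A.take k).map List.length).sum

section tokenStart

variable {β : Type*} (A : List (List β))

@[simp]
lemma tokenStart_zero : tokenStart A 0 = 0 := by
  simp [tokenStart]

lemma tokenStart_add (k m : ℕ) :
    tokenStart A (k + m) = tokenStart A k + (((A.drop k).take m).map List.length).sum := by
  rw [tokenStart, tokenStart, List.take_add, List.map_append, List.sum_append]

lemma tokenStart_succ (k : ℕ) : tokenStart A (k + 1) = tokenStart A k + A[k]!.length := by
  rw [tokenStart_add]
  by_cases hk : k < A.length
  · rw [List.drop_eq_getElem_cons hk, getElem!_pos A k hk]
    simp only [List.take_succ_cons, List.take_zero, List.map_cons, List.map_nil, List.sum_cons,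
      List.sum_nil, add_zero]
  · rw [List.drop_of_length_le (not_lt.mp hk), getElem!_neg A k hk]
    rfl

lemma tokenStart_mono : Monotone (tokenStart A) := by
  intro k m hkm
  obtain ⟨m, rfl⟩ := Nat.exists_eq_add_of_le hkm
  rw [tokenStart_add]
  exact Nat.le_add_right _ _

lemma tokenStart_le_length_flatten (k : ℕ) : tokenStart A k ≤ A.flatten.length := by
  rw [List.length_flatten, tokenStart]
  conv_rhs => rw [← A.take_append_drop k]
  rw [List.map_append, List.sum_append]
  exact Nat.le_add_right _ _

lemma tokenStart_length : tokenStart A A.length = A.flatten.length := by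
  rw [tokenStart, List.take_length, List.length_flatten]

end tokenStart

lemma flatMap_range_append_of_eq_append {β : Type*} (f g : ℕ → List β) (N : ℕ)
    (h : ∀ i < N, f i = g i ++ f (i + 1)) : f 0 = (List.range N).flatMap g ++ f N := by
  induction N with
  | zero => simp
  | succ N ih =>
    rw [ih fun i hi => h i (by omega), h N (by omega), List.range_succ, List.flatMap_append,
      List.flatMap_singleton, List.append_assoc]

lemma chunk_eq_drop {β : Type*} (S : List β) (Lc Lo : ℕ) {i : ℕ}
    (h : S.length ≤ Lc * (i + 1)) :
    (S.drop (Lc * i)).take (Lc + Lo) = S.drop (Lc * i) :=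
  List.take_of_length_le (by rw [List.length_drop, mul_add, mul_one] at *; omega)

section Greedy

variable (V : Finset (List α))

lemma firstTok_prefix (X : List α) : firstTok V X <+: X := by
  unfold firstTok
  cases h : ((V.filter (fun w => w ≠ [] ∧ w <+: X)).toList.argmax List.length) with
  | none => simpa using List.take_prefix 1 X
  | some w =>
    have hw := List.argmax_mem h
    rw [Finset.mem_toList, Finset.mem_filter] at hw
    simpa using hw.2.2

@[simp]
lemma F_nil : F V ([] : List α) = [] := by
  rw [F]

lemma F_of_ne_nil {X : List α} (hX : X ≠ []) :
    F V X = firstTok V X :: F V (X.drop (firstTok V X).length) := by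
  cases X with
  | nil => exact absurd rfl hX
  | cons a s => rw [F]

lemma F_eq_cons_of_firstTok_eq {X t : List α} (ht : t ≠ []) (h : firstTok V X = t) :
    F V X = t :: F V (X.drop t.length) := by
  have hX : X ≠ [] := by
    rintro rfl
    exact ht (List.prefix_nil.mp (h ▸ firstTok_prefix V []))
  rw [F_of_ne_nil V hX, h]

lemma F_flatten (X : List α) : (F V X).flatten = X := by
  induction h : X.length using Nat.strong_induction_on generalizing X with
  | _ m ih =>
    rcases eq_or_ne X [] with rfl | hX
    · simp
    obtain ⟨a, s, rfl⟩ := List.exists_cons_of_ne_nil hX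
    have hlen := List.length_pos_iff.mpr (firstTok_ne_nil V a s)
    rw [F_of_ne_nil V hX, List.flatten_cons, ih _ (by simp [← h]; omega) _ rfl]
    nth_rewrite 1 [List.prefix_iff_eq_take.mp (firstTok_prefix V _)]
    exact List.take_append_drop _ _

lemma ne_nil_of_mem_F {X t : List α} (ht : t ∈ F V X) : t ≠ [] := by
  induction h : X.length using Nat.strong_induction_on generalizing X with
  | _ m ih =>
    rcases eq_or_ne X [] with rfl | hX
    · simp at ht
    obtain ⟨a, s, rfl⟩ := List.exists_cons_of_ne_nil hX
    rw [F_of_ne_nil V hX, List.mem_cons] at ht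
    rcases ht with rfl | ht
    · exact firstTok_ne_nil V a s
    · have hlen := List.length_pos_iff.mpr (firstTok_ne_nil V a s)
      exact ih _ (by simp [← h]; omega) ht rfl

lemma F_drop_tokenStart (X : List α) (k : ℕ) :
    F V (X.drop (tokenStart (F V X) k)) = (F V X).drop k := by
  induction k generalizing X with
  | zero => simp
  | succ k ih =>
    rcases eq_or_ne X [] with rfl | hX
    · simp [tokenStart]
    rw [F_of_ne_nil V hX, tokenStart, List.take_succ_cons, List.map_cons, List.sum_cons,
      ← List.drop_drop, ← tokenStart, ih, List.drop_succ_cons]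

lemma firstTok_drop_tokenStart {X : List α} {k : ℕ} (hk : k < (F V X).length) :
    firstTok V (X.drop (tokenStart (F V X) k)) = (F V X)[k]! := by
  have h := F_drop_tokenStart V X k
  rw [List.drop_eq_getElem_cons hk] at h
  have hne : X.drop (tokenStart (F V X) k) ≠ [] := by
    intro hnil
    simp [hnil] at h
    omega
  rw [F_of_ne_nil V hne, List.cons.injEq] at h
  rw [h.1, getElem!_pos _ k hk]

lemma firstTok_eq_of_prefix (hsingle : ∀ a : α, [a] ∈ V) {Y X : List α} (hY : Y ≠ [])
    (hYX : Y <+: X) (hlen : V.sup List.length ≤ Y.length) :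
    firstTok V Y = firstTok V X := by
  have hfilter :
      V.filter (fun w => w ≠ [] ∧ w <+: Y) = V.filter (fun w => w ≠ [] ∧ w <+: X) := by
    ext w
    simp only [Finset.mem_filter]
    constructor
    · rintro ⟨hw, hne, hp⟩
      exact ⟨hw, hne, hp.trans hYX⟩
    · rintro ⟨hw, hne, hp⟩
      exact ⟨hw, hne, List.prefix_of_prefix_length_le hp hYX ((Finset.le_sup hw).trans hlen)⟩
  obtain ⟨a, s, rfl⟩ := List.exists_cons_of_ne_nil hY
  have hmem : [a] ∈ V.filter (fun w => w ≠ [] ∧ w <+: a :: s) :=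
    Finset.mem_filter.mpr
      ⟨hsingle a, List.cons_ne_nil _ _, List.cons_prefix_cons.mpr ⟨rfl, s.nil_prefix⟩⟩
  unfold firstTok
  rw [← hfilter]
  cases h : (V.filter (fun w => w ≠ [] ∧ w <+: a :: s)).toList.argmax List.length with
  | none =>
    rw [List.argmax_eq_none, Finset.toList_eq_nil] at h
    simp [h] at hmem
  | some w => rfl

lemma firstTok_drop_tokenStart_of_prefix (hsingle : ∀ a : α, [a] ∈ V) {C X : List α}
    (hCX : C <+: X) {k : ℕ} (hk : k < (F V C).length)
    (hlen : tokenStart (F V C) k + V.sup List.length ≤ C.length) :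
    firstTok V (X.drop (tokenStart (F V C) k)) = (F V C)[k]! := by
  have hne : C.drop (tokenStart (F V C) k) ≠ [] := by
    intro hnil
    have h := F_drop_tokenStart V C k
    rw [hnil, F_nil, eq_comm, List.drop_eq_nil_iff] at h
    omega
  rw [← firstTok_drop_tokenStart V hk,
    firstTok_eq_of_prefix V hsingle hne (hCX.drop _) (by rw [List.length_drop]; omega)]

lemma F_drop_eq_append {X : List α} {A : List (List α)} {a k e : ℕ} (hke : k ≤ e)
    (hA : ∀ j, k ≤ j → j < e →
      A[j]! ≠ [] ∧ firstTok V (X.drop (a + tokenStart A j)) = A[j]!) :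
    F V (X.drop (a + tokenStart A k)) = (A.take e).drop k ++ F V (X.drop (a + tokenStart A e)) := by
  obtain ⟨m, rfl⟩ := Nat.exists_eq_add_of_le hke
  induction m generalizing k with
  | zero => simp
  | succ m ih =>
    obtain ⟨hne, hfirst⟩ := hA k le_rfl (by omega)
    have hk : k < A.length := by
      by_contra hk
      exact hne (getElem!_neg A k hk)
    have hk' : k < (A.take (k + (m + 1))).length := by
      rw [List.length_take]; omega
    rw [F_eq_cons_of_firstTok_eq V hne hfirst, List.drop_drop, Nat.add_assoc, ← tokenStart_succ,
      List.drop_eq_getElem_cons hk', List.getElem_take, ← getElem!_pos A k hk, List.cons_append,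
      show k + (m + 1) = k + 1 + m by omega,
      ih (Nat.le_add_right _ _) fun j hj hj' => hA j (by omega) (by omega)]

end Greedy

section Merge

variable {β : Type*} (Tk : ℕ → List (List β)) (l r n : ℕ → ℕ) (N : ℕ)

def mergeStart : ℕ → ℕ
  | 0 => 0
  | i + 1 => r i + n i

def mergeEnd (i : ℕ) : ℕ :=
  if i + 1 < N then l i + n i else (Tk i).length

def mergePiece (i : ℕ) : List (List β) :=
  ((Tk i).take (mergeEnd Tk l n N i)).drop (mergeStart r n i)

lemma merged_eq_flatMap_mergePiece (hN : 0 < N) :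
    (if N = 1 then Tk 0
     else
       (Tk 0).take (l 0 + n 0)
         ++ ((List.range (N - 2)).map
              (fun i => ((Tk (i + 1)).take (l (i + 1) + n (i + 1))).drop (r i + n i))).flatten
         ++ (Tk (N - 1)).drop (r (N - 2) + n (N - 2)))
      = (List.range N).flatMap (mergePiece Tk l r n N) := by
  rcases N with _ | _ | N
  · exact absurd hN (lt_irrefl 0)
  · simp [mergePiece, mergeEnd, mergeStart]
  rw [if_neg (by omega), List.range_succ, List.range_succ_eq_map, List.flatMap_append,
    List.flatMap_cons, List.flatMap_singleton, List.flatMap_map, ← List.flatMap_def]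
  refine congrArg₂ (· ++ ·) (congrArg₂ (· ++ ·) ?_ ?_) ?_
  · simp [mergePiece, mergeEnd, mergeStart]
  · refine List.flatMap_congr fun i hi => ?_
    have hi : i < N := by simpa using hi
    simp [mergePiece, mergeEnd, mergeStart, hi]
  · simp [mergePiece, mergeEnd, mergeStart]

lemma mergeEnd_le_length
    (hbound : ∀ i, i + 1 < N →
      l i + n i ≤ (Tk i).length ∧ r i + n i ≤ (Tk (i + 1)).length)
    (i : ℕ) : mergeEnd Tk l n N i ≤ (Tk i).length := by
  unfold mergeEnd
  split_ifs with hi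
  exacts [(hbound i hi).1, le_rfl]

lemma mergeStart_le_mergeEnd
    (hbound : ∀ i, i + 1 < N →
      l i + n i ≤ (Tk i).length ∧ r i + n i ≤ (Tk (i + 1)).length)
    (hmono : ∀ i, i + 2 < N → r i + n i ≤ l (i + 1) + n (i + 1)) {i : ℕ} (hi : i < N) :
    mergeStart r n i ≤ mergeEnd Tk l n N i := by
  rcases i with _ | i
  · exact Nat.zero_le _
  unfold mergeStart mergeEnd
  split_ifs with hi'
  exacts [hmono i hi', (hbound i hi).2]

lemma tokenStart_mergeEnd (Lc : ℕ) (hn : ∀ i, i + 1 < N → 1 ≤ n i)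
    (htok : ∀ i, i + 1 < N → ∀ j < n i, (Tk i)[l i + j]! = (Tk (i + 1))[r i + j]!)
    (hpos : ∀ i, i + 1 < N → ∀ j < n i,
      Lc * i + tokenStart (Tk i) (l i + j) = Lc * (i + 1) + tokenStart (Tk (i + 1)) (r i + j))
    {i : ℕ} (hi : i + 1 < N) :
    Lc * i + tokenStart (Tk i) (mergeEnd Tk l n N i)
      = Lc * (i + 1) + tokenStart (Tk (i + 1)) (mergeStart r n (i + 1)) := by
  obtain ⟨m, hm⟩ := Nat.exists_eq_add_of_le' (hn i hi)
  have hlast := hpos i hi m (by omega)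
  rw [mergeEnd, if_pos hi, mergeStart, hm, ← add_assoc, ← add_assoc, tokenStart_succ,
    tokenStart_succ, htok i hi m (by omega)]
  omega

end Merge

section Chunks

variable (V : Finset (List α)) (S : List α) (Lc Lo N : ℕ) (Tk : ℕ → List (List α))
  (l r n : ℕ → ℕ)

theorem firstTok_drop_eq_chunk_token (hsingle : ∀ a : α, [a] ∈ V)
    (hNbig : S.length ≤ Lc * N)
    (hTk : ∀ i, Tk i = F V ((S.drop (Lc * i)).take (Lc + Lo)))
    (hbound : ∀ i, i + 1 < N →
      l i + n i ≤ (Tk i).length ∧ r i + n i ≤ (Tk (i + 1)).length)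
    (htok : ∀ i, i + 1 < N → ∀ j < n i, (Tk i)[l i + j]! = (Tk (i + 1))[r i + j]!)
    (hpos : ∀ i, i + 1 < N → ∀ j < n i,
      Lc * i + tokenStart (Tk i) (l i + j) = Lc * (i + 1) + tokenStart (Tk (i + 1)) (r i + j))
    (hlong : ∀ i, i + 1 < N →
      V.sup List.length < ((((Tk i).drop (l i)).take (n i)).map List.length).sum)
    (hmono : ∀ i, i + 2 < N → r i + n i ≤ l (i + 1) + n (i + 1))
    (i : ℕ) (hi : i < N) {j : ℕ} (hj : j < mergeEnd Tk l n N i) :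
    firstTok V (S.drop (Lc * i + tokenStart (Tk i) j)) = (Tk i)[j]! := by
  have hjlen := hj.trans_le (mergeEnd_le_length Tk l r n N hbound i)
  by_cases hlast : i + 1 < N
  swap
  · have hchunk := chunk_eq_drop S Lc Lo (i := i)
      (hNbig.trans (Nat.mul_le_mul_left Lc (show N ≤ i + 1 by omega)))
    rw [hTk i, hchunk] at hjlen ⊢
    rw [← List.drop_drop]
    exact firstTok_drop_tokenStart V hjlen
  rw [mergeEnd, if_pos hlast] at hj
  by_cases hjl : j < l i
  · -- the rest of chunk `i` from token `j` on contains the whole matched run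
    have hrun := tokenStart_add (Tk i) (l i) (n i)
    have hend := tokenStart_le_length_flatten (Tk i) (l i + n i)
    have hle := tokenStart_mono (Tk i) hjl.le
    have hlong := hlong i hlast
    rw [hTk i] at hrun hend hle hlong hjlen ⊢
    rw [F_flatten] at hend
    rw [← List.drop_drop]
    exact firstTok_drop_tokenStart_of_prefix V hsingle (List.take_prefix _ _) hjlen (by omega)
  · obtain ⟨j, rfl⟩ := Nat.exists_eq_add_of_le (not_lt.mp hjl)
    rw [hpos i hlast j (by omega), htok i hlast j (by omega)]
    have hnext := mergeStart_le_mergeEnd Tk l r n N hbound hmono (i := i + 1) hlast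
    rw [mergeStart] at hnext
    exact firstTok_drop_eq_chunk_token hsingle hNbig hTk hbound htok hpos hlong hmono (i + 1)
      hlast (by omega)
termination_by N - i

theorem F_drop_mergeStart (hsingle : ∀ a : α, [a] ∈ V)
    (hNbig : S.length ≤ Lc * N)
    (hTk : ∀ i, Tk i = F V ((S.drop (Lc * i)).take (Lc + Lo)))
    (hn : ∀ i, i + 1 < N → 1 ≤ n i)
    (hbound : ∀ i, i + 1 < N →
      l i + n i ≤ (Tk i).length ∧ r i + n i ≤ (Tk (i + 1)).length)
    (htok : ∀ i, i + 1 < N → ∀ j < n i, (Tk i)[l i + j]! = (Tk (i + 1))[r i + j]!)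
    (hpos : ∀ i, i + 1 < N → ∀ j < n i,
      Lc * i + tokenStart (Tk i) (l i + j) = Lc * (i + 1) + tokenStart (Tk (i + 1)) (r i + j))
    (hlong : ∀ i, i + 1 < N →
      V.sup List.length < ((((Tk i).drop (l i)).take (n i)).map List.length).sum)
    (hmono : ∀ i, i + 2 < N → r i + n i ≤ l (i + 1) + n (i + 1))
    {i : ℕ} (hi : i < N) :
    F V (S.drop (Lc * i + tokenStart (Tk i) (mergeStart r n i)))
      = mergePiece Tk l r n N i
        ++ F V (S.drop (Lc * (i + 1) + tokenStart (Tk (i + 1)) (mergeStart r n (i + 1)))) := by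
  have htoken : ∀ j, mergeStart r n i ≤ j → j < mergeEnd Tk l n N i →
      (Tk i)[j]! ≠ [] ∧ firstTok V (S.drop (Lc * i + tokenStart (Tk i) j)) = (Tk i)[j]! := by
    intro j _ hj
    have hjlen := hj.trans_le (mergeEnd_le_length Tk l r n N hbound i)
    refine ⟨ne_nil_of_mem_F V (X := (S.drop (Lc * i)).take (Lc + Lo)) ?_,
      firstTok_drop_eq_chunk_token V S Lc Lo N Tk l r n hsingle hNbig hTk hbound htok hpos hlong
        hmono i hi hj⟩
    rw [← hTk i, getElem!_pos _ j hjlen]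
    exact List.getElem_mem hjlen
  rw [mergePiece,
    F_drop_eq_append V (mergeStart_le_mergeEnd Tk l r n N hbound hmono hi) htoken]
  congr 1
  by_cases hlast : i + 1 < N
  · rw [tokenStart_mergeEnd Tk l r n N Lc hn htok hpos hlast]
  -- past the end of `S` both sides are the tokenization of the empty string
  have hchunk := chunk_eq_drop S Lc Lo (i := i)
    (hNbig.trans (Nat.mul_le_mul_left Lc (show N ≤ i + 1 by omega)))
  have hfull : (Tk i).flatten = S.drop (Lc * i) := by rw [hTk i, hchunk, F_flatten]
  have hN := Nat.mul_le_mul_left Lc (show N ≤ i + 1 by omega)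
  rw [mergeEnd, if_neg hlast, tokenStart_length, hfull, List.length_drop,
    List.drop_of_length_le (by omega), List.drop_of_length_le (by omega)]

end Chunks

theorem lossless_parallel_tokenization_general (V : Finset (List α))
    (hsingle : ∀ a : α, [a] ∈ V)
    (T : ℕ) (hT : T = V.sup List.length)
    (S : List α) (Lc Lo N : ℕ)
    (hNpos : 0 < N) (hNbig : S.length ≤ Lc * N)
    (Tk : ℕ → List (List α))
    (hTk : ∀ i, Tk i = F V ((S.drop (Lc * i)).take (Lc + Lo)))
    (l r n : ℕ → ℕ)
    (hn : ∀ i, i + 1 < N → 1 ≤ n i)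
    (hbound : ∀ i, i + 1 < N →
      l i + n i ≤ (Tk i).length ∧ r i + n i ≤ (Tk (i + 1)).length)
    (htok : ∀ i, i + 1 < N → ∀ j < n i,
      (Tk i)[l i + j]! = (Tk (i + 1))[r i + j]!)
    (hpos : ∀ i, i + 1 < N → ∀ j < n i,
      Lc * i + (((Tk i).take (l i + j)).map List.length).sum
        = Lc * (i + 1) + (((Tk (i + 1)).take (r i + j)).map List.length).sum)
    (hlong : ∀ i, i + 1 < N →
      T < ((((Tk i).drop (l i)).take (n i)).map List.length).sum)
    (hmono : ∀ i, i + 2 < N → r i + n i ≤ l (i + 1) + n (i + 1)) :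
    (if N = 1 then Tk 0
     else
       (Tk 0).take (l 0 + n 0)
         ++ ((List.range (N - 2)).map
              (fun i => ((Tk (i + 1)).take (l (i + 1) + n (i + 1))).drop (r i + n i))).flatten
         ++ (Tk (N - 1)).drop (r (N - 2) + n (N - 2)))
      = F V S := by
  subst hT
  have htelescope := flatMap_range_append_of_eq_append
    (fun i => F V (S.drop (Lc * i + tokenStart (Tk i) (mergeStart r n i))))
    (mergePiece Tk l r n N) N fun i hi =>
      F_drop_mergeStart V S Lc Lo N Tk l r n hsingle hNbig hTk hn hbound htok hpos hlong hmono hi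
  have hend : S.drop (Lc * N + tokenStart (Tk N) (mergeStart r n N)) = [] :=
    List.drop_of_length_le (by omega)
  beta_reduce at htelescope
  rw [hend, F_nil, List.append_nil, Nat.mul_zero, mergeStart, tokenStart_zero, Nat.add_zero,
    List.drop_zero] at htelescope
  rw [merged_eq_flatMap_mergePiece Tk l r n N hNpos, htelescope]

/-- Theorem 1 of the paper, lossless merging of N overlapping
chunks: `S` is split into `N` chunks `Tk i = F (S[Lc*i : Lc*i + Lc + Lo])`
(`0`-indexed, so `Tk i` is the paper's `T_{i+1}`), where `N` is the least
positive integer with `Lc * N ≥ |S|`.  If each pair of adjacent chunks has a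
matched run of `n i ≥ 1` identical tokens (`htok`) whose global start
positions in `S` agree (`hpos`), the matched run is longer than `T` in
characters (`hlong`), and the merge index ranges are well-formed (`hmono`),
then the merged token list
`Tk 0[: l 0 + n 0] ++ Tk 1[r 0 + n 0 : l 1 + n 1] ++ … ++ Tk (N-1)[r (N-2) + n (N-2) :]`
(which is just `Tk 0` when `N = 1`, i.e. when there is a single chunk and no
merging occurs) equals `F S`, the tokenization of the original string. -/
theorem lossless_parallel_tokenization (V : Finset (List α))
    (hne : ∀ w ∈ V, w ≠ []) (hsingle : ∀ a : α, [a] ∈ V)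
    (T : ℕ) (hT : T = V.sup List.length)
    (S : List α) (Lc Lo N : ℕ) (hLc : 1 ≤ Lc)
    (hNpos : 0 < N) (hNbig : S.length ≤ Lc * N)
    (hNleast : ∀ m : ℕ, 0 < m → S.length ≤ Lc * m → N ≤ m)
    (Tk : ℕ → List (List α))
    (hTk : ∀ i, Tk i = F V ((S.drop (Lc * i)).take (Lc + Lo)))
    (l r n : ℕ → ℕ)
    (hn : ∀ i, i + 1 < N → 1 ≤ n i)
    (hbound : ∀ i, i + 1 < N →
      l i + n i ≤ (Tk i).length ∧ r i + n i ≤ (Tk (i + 1)).length)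
    (htok : ∀ i, i + 1 < N → ∀ j < n i,
      (Tk i)[l i + j]! = (Tk (i + 1))[r i + j]!)
    (hpos : ∀ i, i + 1 < N → ∀ j < n i,
      Lc * i + (((Tk i).take (l i + j)).map List.length).sum
        = Lc * (i + 1) + (((Tk (i + 1)).take (r i + j)).map List.length).sum)
    (hlong : ∀ i, i + 1 < N →
      T < ((((Tk i).drop (l i)).take (n i)).map List.length).sum)
    (hmono : ∀ i, i + 2 < N → r i + n i ≤ l (i + 1) + n (i + 1)) :
    (if N = 1 then Tk 0
     else
       (Tk 0).take (l 0 + n 0)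
         ++ ((List.range (N - 2)).map
              (fun i => ((Tk (i + 1)).take (l (i + 1) + n (i + 1))).drop (r i + n i))).flatten
         ++ (Tk (N - 1)).drop (r (N - 2) + n (N - 2)))
      = F V S :=
  lossless_parallel_tokenization_general V hsingle T hT S Lc Lo N hNpos hNbig Tk hTk l r n hn hbound
    htok hpos hlong hmono
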